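/- For internal nodes u, v of an ORB-tree T with covariance matrix S and Haar-like matrix Φ (columns φ_v), one has (Φ'SΦ)(u,v) = Σ_{i ∈ L(u)∩L(v)} φ_u(i) φ_v(i) ℓ*(i,v). In particular, (Φ'SΦ)(u,v) = 0 whenever L(u) ∩ L(v) = ∅. -/

import Mathlib

open Finset

noncomputable section
open scoped Classical

/-- A finite rooted tree on vertices `Fin n`, given by a parent function:
every vertex reaches the root by iterating `parent`, and the root is its own parent. -/
structure RTree where
  n : ℕ
  npos : 0 < n
  root : Fin n
  parent : Fin n → Fin n
  parent_root : parent root = root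
  reach : ∀ v, ∃ k, parent^[k] v = root

namespace RTree

variable (T : RTree)

/-- `u` is an ancestor of `v` (every vertex is an ancestor of itself). -/
def Anc (u v : Fin T.n) : Prop := ∃ k, T.parent^[k] v = u

/-- The children of a vertex. -/
def children (v : Fin T.n) : Finset (Fin T.n) :=
  Finset.univ.filter fun u => T.parent u = v ∧ u ≠ T.root

def IsLeaf (v : Fin T.n) : Prop := T.children v = ∅

/-- The leaf set of the tree. -/
def leaves : Finset (Fin T.n) := Finset.univ.filter fun v => T.IsLeaf v

/-- The internal (non-leaf) vertices; the root is internal. -/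
def internal : Finset (Fin T.n) := Finset.univ.filter fun v => ¬ T.IsLeaf v

/-- `L(v)`: the leaves descending from `v`. -/
def Ldesc (v : Fin T.n) : Finset (Fin T.n) := T.leaves.filter fun i => T.Anc v i

/-- Depth of a vertex: number of edges to the root. -/
def depth (v : Fin T.n) : ℕ := Nat.find (T.reach v)

/-- Number of vertices of the subtree rooted at `v`. -/
def subtreeSize (v : Fin T.n) : ℕ := (Finset.univ.filter fun u => T.Anc v u).card

/-- ORB-tree: the root has exactly one child and is not a leaf, and every other
internal vertex has exactly two children (so every vertex has degree 1 or 3). -/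
def IsORB : Prop :=
  ¬ T.IsLeaf T.root ∧ (T.children T.root).card = 1 ∧
  ∀ v, ¬ T.IsLeaf v → v ≠ T.root → (T.children v).card = 2

/-- The type of leaves. -/
abbrev Leaf := {i // i ∈ T.leaves}

/-- `δ_e` for the edge `e` above vertex `v`: the indicator vector of the leaves
descending from that edge. -/
def delta (v : Fin T.n) : T.Leaf → ℝ := fun i => if T.Anc v i.1 then 1 else 0

/-- The covariance matrix of the tree with branch lengths `ℓ`
(`ℓ v` is the length of the edge joining `v` to its parent):
`S = ∑_{e ∈ E} ℓ(e) δ_e δ_e'`.  Equivalently `S(i,j) = ∑_{e ∈ [i∧j,∘]} ℓ(e)`. -/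
def cov (ℓ : Fin T.n → ℝ) : Matrix T.Leaf T.Leaf ℝ :=
  ∑ v ∈ Finset.univ.filter (fun v => v ≠ T.root),
    ℓ v • Matrix.vecMulVec (T.delta v) (T.delta v)

/-- The trace branch length `ℓ*(i,v) = ∑_{e ∈ [i,v]} |L(e)| ℓ(e)`; the edge above `w`
lies on the path between `i` and `v` iff exactly one of `i`, `v` descends from `w`. -/
def lstar (ℓ : Fin T.n → ℝ) (i v : Fin T.n) : ℝ :=
  ∑ w ∈ Finset.univ.filter (fun w => w ≠ T.root ∧
      ((T.Anc w i ∧ ¬ T.Anc w v) ∨ (T.Anc w v ∧ ¬ T.Anc w i))),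
    ((T.Ldesc w).card : ℝ) * ℓ w

/-- `φ` is the family of Haar-like wavelets of `T`, indexed by internal vertices. -/
def IsHaarLike (φ : Fin T.n → T.Leaf → ℝ) : Prop :=
  (∀ i, φ T.root i = 1 / Real.sqrt ((T.leaves.card : ℝ))) ∧
  ∀ v ∈ T.internal, v ≠ T.root → ∃ c₀ c₁, c₀ ≠ c₁ ∧ T.children v = {c₀, c₁} ∧
    ∀ i : T.Leaf, φ v i =
      if i.1 ∈ T.Ldesc c₀ then
        Real.sqrt (((T.Ldesc c₁).card : ℝ) / (((T.Ldesc c₀).card : ℝ) * ((T.Ldesc v).card : ℝ)))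
      else if i.1 ∈ T.Ldesc c₁ then
        - Real.sqrt (((T.Ldesc c₀).card : ℝ) / (((T.Ldesc c₁).card : ℝ) * ((T.Ldesc v).card : ℝ)))
      else 0

/-- `T` is trace-balanced (at every non-root internal vertex). -/
def TraceBalanced (ℓ : Fin T.n → ℝ) : Prop :=
  ∀ v ∈ T.internal, v ≠ T.root → ∀ i ∈ T.Ldesc v, ∀ j ∈ T.Ldesc v,
    T.lstar ℓ i v = T.lstar ℓ j v

end RTree

/-!
Expanding `S = ∑_e ℓ(e) δ_e δ_e'` gives `(Φ'SΦ)(u,v) = ∑_e ℓ(e) ⟨φ_u, δ_e⟩ ⟨δ_e, φ_v⟩`.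
If `e` lies on the path from `v` to the root, `⟨δ_e, φ_v⟩ = ∑ φ_v = 0`. For every other edge,
`φ_v` is constant on `L(e)` (zero when `L(e)` and `L(v)` are disjoint), so the product is
`|L(e)| ∑_{i ∈ L(e)} φ_u(i) φ_v(i)`. Exchanging the two sums, a leaf `i ∈ L(v)` collects
exactly the edges of the path `[i, v]`, each with weight `|L(e)| ℓ(e)`, which is `ℓ*(i, v)`.
-/

theorem Real.sqrt_div_mul_mul_self {x y z : ℝ} (hx : 0 ≤ x) :
    √(y / (x * z)) * x = √(x * y / z) := by
  rcases hx.eq_or_lt with rfl | hx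
  · simp
  rw [← Real.sqrt_sq hx.le, ← Real.sqrt_mul' _ (sq_nonneg x), Real.sqrt_sq hx.le]
  congr 1
  field_simp

open Matrix in
theorem Matrix.sum_sum_mul_sum_smul_vecMulVec {R ι κ : Type*} [CommSemiring R] [Fintype ι]
    (s : Finset κ) (c : κ → R) (d : κ → ι → R) (x y : ι → R) :
    ∑ j, ∑ i, x j * (∑ w ∈ s, c w • vecMulVec (d w) (d w) : Matrix ι ι R) j i * y i =
      ∑ w ∈ s, c w * ((x ⬝ᵥ d w) * (d w ⬝ᵥ y)) := by
  have hform : ∀ M : Matrix ι ι R, ∑ j, ∑ i, x j * M j i * y i = x ⬝ᵥ (M *ᵥ y) := fun M => by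
    simp only [dotProduct, mulVec, Finset.mul_sum, mul_assoc]
  rw [hform, sum_mulVec, dotProduct_sum]
  refine Finset.sum_congr rfl fun w _ => ?_
  rw [smul_mulVec, vecMulVec_mulVec, op_smul_eq_smul, dotProduct_smul, dotProduct_smul,
    smul_eq_mul, smul_eq_mul, mul_comm (d w ⬝ᵥ y)]

theorem Matrix.dotProduct_ite_mul_ite_dotProduct_of_const {R ι : Type*} [CommSemiring R]
    [Fintype ι] (p : ι → Prop) [DecidablePred p] {x y : ι → R} {c : R} (hy : ∀ i, p i → y i = c) :
    (x ⬝ᵥ fun i => if p i then 1 else 0) * ((fun i => if p i then 1 else 0) ⬝ᵥ y) =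
      #{i | p i} * ∑ i with p i, x i * y i := by
  simp only [dotProduct, mul_ite, ite_mul, mul_one, one_mul, mul_zero, zero_mul,
    ← Finset.sum_filter]
  have hy_sum : ∑ i with p i, y i = #{i | p i} * c := by
    rw [Finset.sum_congr rfl fun i hi => hy i (Finset.mem_filter.mp hi).2, Finset.sum_const,
      nsmul_eq_mul]
  have hxy_sum : ∑ i with p i, x i * y i = (∑ i with p i, x i) * c := by
    rw [Finset.sum_mul]
    exact Finset.sum_congr rfl fun i hi => by rw [hy i (Finset.mem_filter.mp hi).2]
  rw [hy_sum, hxy_sum]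
  ring

namespace RTree

variable {T : RTree}

theorem Anc.refl (v : Fin T.n) : T.Anc v v := ⟨0, rfl⟩

theorem Anc.trans {a b c : Fin T.n} (hab : T.Anc a b) (hbc : T.Anc b c) : T.Anc a c := by
  obtain ⟨k, rfl⟩ := hab
  obtain ⟨m, rfl⟩ := hbc
  exact ⟨k + m, Function.iterate_add_apply ..⟩

theorem Anc.total_of_anc {a b i : Fin T.n} (ha : T.Anc a i) (hb : T.Anc b i) :
    T.Anc a b ∨ T.Anc b a := by
  obtain ⟨k, rfl⟩ := ha
  obtain ⟨m, rfl⟩ := hb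
  rcases le_total k m with h | h
  · exact .inr ⟨m - k, by rw [← Function.iterate_add_apply, Nat.sub_add_cancel h]⟩
  · exact .inl ⟨k - m, by rw [← Function.iterate_add_apply, Nat.sub_add_cancel h]⟩

theorem anc_root (v : Fin T.n) : T.Anc T.root v := T.reach v

theorem iterate_parent_root (k : ℕ) : T.parent^[k] T.root = T.root :=
  Function.iterate_fixed T.parent_root k

theorem eq_root_of_anc_root {w : Fin T.n} (h : T.Anc w T.root) : w = T.root := by
  obtain ⟨k, hk⟩ := h
  rw [← hk, iterate_parent_root]

theorem eq_root_of_iterate_parent_eq {p : ℕ} (hp : 0 < p) {x : Fin T.n}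
    (hx : T.parent^[p] x = x) : x = T.root := by
  obtain ⟨K, hK⟩ := T.reach x
  calc x = T.parent^[p * K] x := ((Function.IsPeriodicPt.mul_const hx K).eq).symm
    _ = T.parent^[p * K - K] (T.parent^[K] x) := by
        rw [← Function.iterate_add_apply, Nat.sub_add_cancel (Nat.le_mul_of_pos_left K hp)]
    _ = T.root := by rw [hK, iterate_parent_root]

theorem mem_children {c v : Fin T.n} : c ∈ T.children v ↔ T.parent c = v ∧ c ≠ T.root := by
  simp [children]

theorem Anc.of_mem_children {c v : Fin T.n} (hc : c ∈ T.children v) : T.Anc v c :=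
  ⟨1, (mem_children.mp hc).1⟩

theorem exists_mem_children_anc {v i : Fin T.n} (hvi : T.Anc v i) (hiv : i ≠ v)
    (hv : v ≠ T.root) : ∃ c ∈ T.children v, T.Anc c i := by
  obtain ⟨k, hk⟩ := hvi
  obtain ⟨k, rfl⟩ : ∃ m, k = m + 1 :=
    Nat.exists_eq_succ_of_ne_zero (by rintro rfl; exact hiv hk)
  refine ⟨T.parent^[k] i, mem_children.mpr ⟨?_, ?_⟩, k, rfl⟩
  · rwa [Function.iterate_succ_apply'] at hk
  · intro hroot
    rw [Function.iterate_succ_apply', hroot, T.parent_root] at hk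
    exact hv hk.symm

theorem not_anc_of_mem_children {v a b : Fin T.n} (ha : a ∈ T.children v)
    (hb : b ∈ T.children v) (hab : a ≠ b) : ¬ T.Anc a b := by
  rintro ⟨k, hk⟩
  obtain ⟨k, rfl⟩ : ∃ m, k = m + 1 :=
    Nat.exists_eq_succ_of_ne_zero (by rintro rfl; exact hab hk.symm)
  obtain ⟨hpa, har⟩ := mem_children.mp ha
  obtain ⟨hpb, -⟩ := mem_children.mp hb
  refine har (eq_root_of_iterate_parent_eq k.succ_pos ?_)
  rw [Function.iterate_succ_apply, hpb, ← hpa] at hk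
  rwa [Function.iterate_succ_apply]

theorem not_anc_of_anc_of_mem_children {v c₀ c₁ i : Fin T.n} (hc₀ : c₀ ∈ T.children v)
    (hc₁ : c₁ ∈ T.children v) (hne : c₀ ≠ c₁) (h₀ : T.Anc c₀ i) : ¬ T.Anc c₁ i := fun h₁ =>
  (h₀.total_of_anc h₁).elim (not_anc_of_mem_children hc₀ hc₁ hne)
    (not_anc_of_mem_children hc₁ hc₀ hne.symm)

theorem leaf_mem_Ldesc (i : T.Leaf) (w : Fin T.n) : i.1 ∈ T.Ldesc w ↔ T.Anc w i.1 := by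
  simp [Ldesc, i.2]

theorem card_filter_anc (w : Fin T.n) : #{i : T.Leaf | T.Anc w i.1} = #(T.Ldesc w) := by
  rw [Finset.card_filter, Finset.sum_coe_sort T.leaves fun i => if T.Anc w i then 1 else 0,
    ← Finset.card_filter]
  rfl

theorem lstar_eq_sum_ite_of_anc (ℓ : Fin T.n → ℝ) {i v : Fin T.n}
    (hvi : T.Anc v i) :
    T.lstar ℓ i v =
      ∑ w with w ≠ T.root, if T.Anc w i ∧ ¬ T.Anc w v then #(T.Ldesc w) * ℓ w else 0 := by
  rw [lstar, Finset.sum_ite, Finset.sum_const_zero, add_zero, Finset.filter_filter]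
  refine Finset.sum_congr (Finset.filter_congr fun w _ => ?_) fun _ _ => rfl
  have : T.Anc w v → T.Anc w i := (·.trans hvi)
  tauto

end RTree

namespace RTree.IsHaarLike

variable {T : RTree} {φ : Fin T.n → T.Leaf → ℝ}

theorem apply_eq_zero (hφ : T.IsHaarLike φ) {v : Fin T.n} (hv : v ∈ T.internal) {i : T.Leaf}
    (hvi : ¬ T.Anc v i.1) : φ v i = 0 := by
  have hvr : v ≠ T.root := by rintro rfl; exact hvi (anc_root i.1)
  obtain ⟨c₀, c₁, -, hch, hval⟩ := hφ.2 v hv hvr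
  have hc₀ : c₀ ∈ T.children v := by simp [hch]
  have hc₁ : c₁ ∈ T.children v := by simp [hch]
  simp only [hval i, leaf_mem_Ldesc]
  rw [if_neg fun h => hvi ((Anc.of_mem_children hc₀).trans h),
    if_neg fun h => hvi ((Anc.of_mem_children hc₁).trans h)]

theorem exists_const_of_not_anc (hφ : T.IsHaarLike φ) {v w : Fin T.n} (hv : v ∈ T.internal)
    (hwv : ¬ T.Anc w v) : ∃ c, ∀ i : T.Leaf, T.Anc w i.1 → φ v i = c := by
  by_cases hvw : T.Anc v w
  swap
  · exact ⟨0, fun i hwi => hφ.apply_eq_zero hv fun hvi => (hwi.total_of_anc hvi).elim hwv hvw⟩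
  by_cases hvr : v = T.root
  · exact ⟨_, fun i _ => hvr ▸ hφ.1 i⟩
  obtain ⟨c₀, c₁, hne, hch, hval⟩ := hφ.2 v hv hvr
  obtain ⟨c, hc, hcw⟩ :=
    exists_mem_children_anc hvw (fun h => hwv (h ▸ Anc.refl w)) hvr
  have hc₀ : c₀ ∈ T.children v := by simp [hch]
  simp only [hch, Finset.mem_insert, Finset.mem_singleton] at hc
  rcases hc with rfl | rfl
  · exact ⟨_, fun i hwi => (hval i).trans (if_pos ((leaf_mem_Ldesc i c).mpr (hcw.trans hwi)))⟩
  · have hc : c ∈ T.children v := by simp [hch]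
    refine ⟨_, fun i hwi => (hval i).trans ((if_neg ?_).trans (if_pos ?_))⟩
    · rw [leaf_mem_Ldesc]
      exact not_anc_of_anc_of_mem_children hc hc₀ hne.symm (hcw.trans hwi)
    · exact (leaf_mem_Ldesc i c).mpr (hcw.trans hwi)

theorem sum_eq_zero (hφ : T.IsHaarLike φ) {v : Fin T.n} (hv : v ∈ T.internal)
    (hvr : v ≠ T.root) : ∑ i, φ v i = 0 := by
  obtain ⟨c₀, c₁, hne, hch, hval⟩ := hφ.2 v hv hvr
  have hc₀ : c₀ ∈ T.children v := by simp [hch]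
  have hc₁ : c₁ ∈ T.children v := by simp [hch]
  set n₀ : ℝ := ((T.Ldesc c₀).card : ℝ)
  set n₁ : ℝ := ((T.Ldesc c₁).card : ℝ)
  set n : ℝ := ((T.Ldesc v).card : ℝ)
  have hsplit : ∀ i : T.Leaf, φ v i = √(n₁ / (n₀ * n)) * (if T.Anc c₀ i.1 then 1 else 0) -
      √(n₀ / (n₁ * n)) * (if T.Anc c₁ i.1 then 1 else 0) := by
    intro i
    simp only [hval i, leaf_mem_Ldesc]
    by_cases h₀ : T.Anc c₀ i.1
    · simp [h₀, not_anc_of_anc_of_mem_children hc₀ hc₁ hne h₀]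
    · by_cases h₁ : T.Anc c₁ i.1 <;> simp [h₀, h₁]
  simp only [hsplit, Finset.sum_sub_distrib, ← Finset.mul_sum, Finset.sum_boole,
    card_filter_anc]
  -- both weights, multiplied by the sizes of their blocks, equal `√(n₀ n₁ / n)`
  rw [sub_eq_zero, Real.sqrt_div_mul_mul_self (by positivity),
    Real.sqrt_div_mul_mul_self (by positivity), mul_comm n₀]

theorem sum_filter_mem_Ldesc_inter (hφ : T.IsHaarLike φ) {u v : Fin T.n}
    (hu : u ∈ T.internal) (hv : v ∈ T.internal) (g : T.Leaf → ℝ) :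
    ∑ i with i.1 ∈ T.Ldesc u ∩ T.Ldesc v, φ u i * φ v i * g i = ∑ i, φ u i * φ v i * g i := by
  refine Finset.sum_filter_of_ne fun i _ h => ?_
  have hui : φ u i ≠ 0 := left_ne_zero_of_mul (left_ne_zero_of_mul h)
  have hvi : φ v i ≠ 0 := right_ne_zero_of_mul (left_ne_zero_of_mul h)
  rw [Finset.mem_inter, leaf_mem_Ldesc, leaf_mem_Ldesc]
  exact ⟨not_not.mp (mt (hφ.apply_eq_zero hu) hui), not_not.mp (mt (hφ.apply_eq_zero hv) hvi)⟩

theorem dotProduct_delta_mul_delta_dotProduct (hφ : T.IsHaarLike φ) {v w : Fin T.n}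
    (hv : v ∈ T.internal) (hw : w ≠ T.root) (x : T.Leaf → ℝ) :
    (x ⬝ᵥ T.delta w) * (T.delta w ⬝ᵥ φ v) =
      #(T.Ldesc w) * ∑ i with T.Anc w i.1 ∧ ¬ T.Anc w v, x i * φ v i := by
  by_cases hwv : T.Anc w v
  · have hvr : v ≠ T.root := fun h => hw (eq_root_of_anc_root (h ▸ hwv))
    have hδφ : T.delta w ⬝ᵥ φ v = 0 := by
      rw [← hφ.sum_eq_zero hv hvr]
      refine Finset.sum_congr rfl fun i _ => ?_
      by_cases hwi : T.Anc w i.1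
      · simp [delta, hwi]
      · simp [delta, hwi, hφ.apply_eq_zero hv fun hvi => hwi (hwv.trans hvi)]
    simp [hδφ, hwv]
  · obtain ⟨c, hc⟩ := hφ.exists_const_of_not_anc hv hwv
    simp only [hwv, not_false_eq_true, and_true]
    rw [← card_filter_anc]
    exact Matrix.dotProduct_ite_mul_ite_dotProduct_of_const _ hc

theorem sum_sum_mul_cov_mul (hφ : T.IsHaarLike φ) {v : Fin T.n} (hv : v ∈ T.internal)
    (ℓ : Fin T.n → ℝ) (x : T.Leaf → ℝ) :
    ∑ j, ∑ i, x j * T.cov ℓ j i * φ v i =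
      ∑ w with w ≠ T.root,
        ℓ w * (#(T.Ldesc w) * ∑ i with T.Anc w i.1 ∧ ¬ T.Anc w v, x i * φ v i) :=
  calc ∑ j, ∑ i, x j * T.cov ℓ j i * φ v i
      = ∑ w with w ≠ T.root, ℓ w * ((x ⬝ᵥ T.delta w) * (T.delta w ⬝ᵥ φ v)) :=
        Matrix.sum_sum_mul_sum_smul_vecMulVec _ _ _ _ _
    _ = _ := Finset.sum_congr rfl fun w hw => by
        rw [hφ.dotProduct_delta_mul_delta_dotProduct hv (Finset.mem_filter.mp hw).2]

theorem sum_mul_mul_lstar (hφ : T.IsHaarLike φ) {v : Fin T.n} (hv : v ∈ T.internal)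
    (ℓ : Fin T.n → ℝ) (x : T.Leaf → ℝ) :
    ∑ i, x i * φ v i * T.lstar ℓ i.1 v =
      ∑ w with w ≠ T.root,
        ℓ w * (#(T.Ldesc w) * ∑ i with T.Anc w i.1 ∧ ¬ T.Anc w v, x i * φ v i) := by
  have hpath : ∀ i : T.Leaf, φ v i * T.lstar ℓ i.1 v = φ v i *
      ∑ w with w ≠ T.root, if T.Anc w i.1 ∧ ¬ T.Anc w v then #(T.Ldesc w) * ℓ w else 0 := by
    intro i
    by_cases hvi : T.Anc v i.1
    · rw [lstar_eq_sum_ite_of_anc ℓ hvi]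
    · rw [hφ.apply_eq_zero hv hvi, zero_mul, zero_mul]
  calc ∑ i, x i * φ v i * T.lstar ℓ i.1 v
      = ∑ i, ∑ w with w ≠ T.root, x i * φ v i *
          if T.Anc w i.1 ∧ ¬ T.Anc w v then #(T.Ldesc w) * ℓ w else 0 :=
        Finset.sum_congr rfl fun i _ => by rw [mul_assoc, hpath, ← mul_assoc, Finset.mul_sum]
    _ = _ := by
      rw [Finset.sum_comm]
      refine Finset.sum_congr rfl fun w _ => ?_
      simp only [mul_ite, mul_zero, Finset.sum_ite, Finset.sum_const_zero, add_zero,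
        ← Finset.sum_mul]
      ring

end RTree.IsHaarLike

theorem haarLike_conj_entry_general (T : RTree) (ℓ : Fin T.n → ℝ)
    (φ : Fin T.n → T.Leaf → ℝ) (hφ : T.IsHaarLike φ) :
    ∀ u ∈ T.internal, ∀ v ∈ T.internal,
      ((∑ j : T.Leaf, ∑ i : T.Leaf, φ u j * T.cov ℓ j i * φ v i) =
        ∑ i ∈ Finset.univ.filter
            (fun i : T.Leaf => i.1 ∈ T.Ldesc u ∩ T.Ldesc v),
          φ u i * φ v i * T.lstar ℓ i.1 v) ∧
      (T.Ldesc u ∩ T.Ldesc v = ∅ →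
        (∑ j : T.Leaf, ∑ i : T.Leaf, φ u j * T.cov ℓ j i * φ v i) = 0) := by
  intro u hu v hv
  have hentry : (∑ j : T.Leaf, ∑ i : T.Leaf, φ u j * T.cov ℓ j i * φ v i) =
      ∑ i with i.1 ∈ T.Ldesc u ∩ T.Ldesc v, φ u i * φ v i * T.lstar ℓ i.1 v := by
    rw [hφ.sum_filter_mem_Ldesc_inter hu hv, hφ.sum_sum_mul_cov_mul hv, hφ.sum_mul_mul_lstar hv]
  refine ⟨hentry, fun hdisj => ?_⟩
  rw [hentry, hdisj]
  simp

/-- `(Φ'SΦ)(u,v) = ∑_{i ∈ L(u) ∩ L(v)} φ_u(i) φ_v(i) ℓ*(i,v)`; in particular the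
entry vanishes whenever `L(u) ∩ L(v) = ∅`. -/
theorem haarLike_conj_entry (T : RTree) (hT : T.IsORB) (ℓ : Fin T.n → ℝ)
    (hℓ : ∀ v, 0 ≤ ℓ v) (hℓpos : ∀ v, T.IsLeaf v → 0 < ℓ v)
    (φ : Fin T.n → T.Leaf → ℝ) (hφ : T.IsHaarLike φ) :
    ∀ u ∈ T.internal, ∀ v ∈ T.internal,
      ((∑ j : T.Leaf, ∑ i : T.Leaf, φ u j * T.cov ℓ j i * φ v i) =
        ∑ i ∈ Finset.univ.filter
            (fun i : T.Leaf => i.1 ∈ T.Ldesc u ∩ T.Ldesc v),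
          φ u i * φ v i * T.lstar ℓ i.1 v) ∧
      (T.Ldesc u ∩ T.Ldesc v = ∅ →
        (∑ j : T.Leaf, ∑ i : T.Leaf, φ u j * T.cov ℓ j i * φ v i) = 0) :=
  haarLike_conj_entry_general T ℓ φ hφ
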